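/- arXiv:math/0208176 — 4 statements merged into one kernel-verified Lean document; each statement's English description precedes it below -/
import Mathlib

section
/- If G is a finite group that is not cyclic of prime power order, then the coset poset C(G) (proper cosets of G ordered by inclusion) is connected; that is, the order complex of C(G) is a connected graph under the relation of comparability. -/
open scoped Pointwise

/-- The coset poset of `G`: the collection of all left cosets of all proper
subgroups of `G` (cosets of the trivial subgroup allowed, `G` itself excluded). -/
def cosetPoset (G : Type*) [Group G] : Set (Set G) :=
  {s | ∃ (x : G) (H : Subgroup G), H ≠ ⊤ ∧ s = x • (H : Set G)}

/-!
Singletons are proper cosets, and `{x}` is joined to `{x * h}` through `x • H` whenever `h` lies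
in a proper subgroup `H`. Hence `{x}` is joined to `{x * w}` for every `w` in the subgroup
generated by all proper subgroups. That subgroup is all of `G` unless `G` is cyclic of prime
power order: if `G` is not cyclic, every `g` lies in the proper subgroup `⟨g⟩`; if `G = ⟨g⟩` has
order divisible by two distinct primes `p` and `q`, then `⟨g ^ p⟩` and `⟨g ^ q⟩` are proper and,
by Bézout, generate `G`. Finally every proper coset contains a singleton.
-/

theorem Nat.exists_primes_ne_dvd_of_not_isPrimePow {n : ℕ} (hn : 1 < n) (h : ¬ IsPrimePow n) :
    ∃ p q : ℕ, p.Prime ∧ q.Prime ∧ p ≠ q ∧ p ∣ n ∧ q ∣ n := by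
  have hcard : 1 < n.primeFactors.card := by
    rw [isPrimePow_iff_card_primeFactors_eq_one] at h
    have : n.primeFactors.Nonempty := Nat.nonempty_primeFactors.mpr hn
    have := this.card_pos
    omega
  obtain ⟨p, hp, q, hq, hpq⟩ := Finset.one_lt_card.mp hcard
  exact ⟨p, q, Nat.prime_of_mem_primeFactors hp, Nat.prime_of_mem_primeFactors hq, hpq,
    Nat.dvd_of_mem_primeFactors hp, Nat.dvd_of_mem_primeFactors hq⟩

namespace Subgroup

variable {G : Type*} [Group G]

theorem zpowers_pow_ne_top [Finite G] (g : G) {n : ℕ} (hn : 1 < n) (hdvd : n ∣ Nat.card G) :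
    zpowers (g ^ n) ≠ ⊤ := by
  intro htop
  have hcard : 0 < Nat.card G := Nat.card_pos
  -- `g ^ n` has order dividing `|G| / n`, which is too small for a generator
  have hdvd' : orderOf (g ^ n) ∣ Nat.card G / n := orderOf_dvd_of_pow_eq_one <| by
    rw [← pow_mul, Nat.mul_div_cancel' hdvd, pow_card_eq_one']
  rw [orderOf_eq_card_of_zpowers_eq_top htop] at hdvd'
  have hpos : 0 < Nat.card G / n := Nat.div_pos (Nat.le_of_dvd hcard hdvd) (by omega)
  have := Nat.le_of_dvd hpos hdvd'
  have := Nat.div_lt_self hcard hn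
  omega

theorem mem_zpowers_pow_sup_zpowers_pow {m n : ℕ} (h : m.Coprime n) (g : G) :
    g ∈ zpowers (g ^ m) ⊔ zpowers (g ^ n) := by
  have hg : (g ^ m) ^ m.gcdA n * (g ^ n) ^ m.gcdB n = g := by
    rw [← zpow_natCast, ← zpow_natCast, ← zpow_mul, ← zpow_mul, ← zpow_add, ← Nat.gcd_eq_gcd_ab,
      h.gcd_eq_one, Nat.cast_one, zpow_one]
  have hmem := mul_mem (mem_sup_left (zpow_mem (mem_zpowers (g ^ m)) (m.gcdA n)))
    (mem_sup_right (zpow_mem (mem_zpowers (g ^ n)) (m.gcdB n)))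
  rwa [hg] at hmem

theorem iSup_ne_top_eq_top [Finite G] (h : ¬ (IsCyclic G ∧ IsPrimePow (Nat.card G))) :
    ⨆ H : {H : Subgroup G // H ≠ ⊤}, (H : Subgroup G) = ⊤ := by
  by_cases hcyc : IsCyclic G
  · rcases subsingleton_or_nontrivial G with hG | hG
    · exact Subsingleton.elim (α := Subgroup G) _ _
    obtain ⟨p, q, hp, hq, hpq, hpG, hqG⟩ := Nat.exists_primes_ne_dvd_of_not_isPrimePow
      Finite.one_lt_card (fun hpp => h ⟨hcyc, hpp⟩)
    obtain ⟨g, hg⟩ := isCyclic_iff_exists_zpowers_eq_top.mp hcyc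
    have hle : zpowers (g ^ p) ⊔ zpowers (g ^ q) ≤
        ⨆ H : {H : Subgroup G // H ≠ ⊤}, (H : Subgroup G) :=
      sup_le (le_iSup_of_le ⟨_, zpowers_pow_ne_top g hp.one_lt hpG⟩ le_rfl)
        (le_iSup_of_le ⟨_, zpowers_pow_ne_top g hq.one_lt hqG⟩ le_rfl)
    refine eq_top_iff.mpr (hg.ge.trans (zpowers_le.mpr ?_))
    exact hle (mem_zpowers_pow_sup_zpowers_pow ((Nat.coprime_primes hp hq).mpr hpq) g)
  · refine eq_top_iff.mpr fun g _ => ?_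
    have hg : zpowers g ≠ ⊤ := fun hg => hcyc (isCyclic_iff_exists_zpowers_eq_top.mpr ⟨g, hg⟩)
    exact le_iSup (fun H : {H : Subgroup G // H ≠ ⊤} => (H : Subgroup G)) ⟨_, hg⟩
      (mem_zpowers g)

end Subgroup

namespace cosetPoset

variable {G : Type*} [Group G]

def Comparable (A B : cosetPoset G) : Prop := (A : Set G) ⊆ B ∨ (B : Set G) ⊆ A

theorem smul_mem (x : G) {H : Subgroup G} (hH : H ≠ ⊤) : x • (H : Set G) ∈ cosetPoset G :=
  ⟨x, H, hH, rfl⟩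

theorem singleton_mem [Nontrivial G] (x : G) : ({x} : Set G) ∈ cosetPoset G := by
  simpa using smul_mem x (bot_ne_top : (⊥ : Subgroup G) ≠ ⊤)

theorem singleton_joined_mul [Nontrivial G] {H : Subgroup G} (hH : H ≠ ⊤) {h : G} (hh : h ∈ H)
    (x : G) :
    Relation.ReflTransGen Comparable (⟨{x}, singleton_mem x⟩ : cosetPoset G)
      ⟨{x * h}, singleton_mem _⟩ := by
  refine .head (b := ⟨_, smul_mem x hH⟩) (.inl ?_) (.single (.inr ?_))
  · exact Set.singleton_subset_iff.mpr (mem_own_leftCoset H.toSubmonoid x)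
  · exact Set.singleton_subset_iff.mpr (Set.smul_mem_smul_set hh)

theorem singleton_joined_mul_of_mem_iSup [Nontrivial G] {w : G}
    (hw : w ∈ ⨆ H : {H : Subgroup G // H ≠ ⊤}, (H : Subgroup G)) (x : G) :
    Relation.ReflTransGen Comparable (⟨{x}, singleton_mem x⟩ : cosetPoset G)
      ⟨{x * w}, singleton_mem _⟩ := by
  refine Subgroup.iSup_induction _ (C := fun w => ∀ x : G, Relation.ReflTransGen Comparable
    (⟨{x}, singleton_mem x⟩ : cosetPoset G) ⟨{x * w}, singleton_mem _⟩) hw ?_ ?_ ?_ x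
  · exact fun H h hh x => singleton_joined_mul H.2 hh x
  · simpa using fun _ => Relation.ReflTransGen.refl
  · exact fun a b ha hb x => by simpa [mul_assoc] using (ha x).trans (hb (x * a))

end cosetPoset

open cosetPoset in
/-- If `G` is a finite group that is not cyclic of prime power order, then the
coset poset `C(G)` is connected: any two proper cosets are joined by a chain of
proper cosets in which consecutive members are comparable under inclusion. -/
theorem stmt_0 {G : Type*} [Group G] [Finite G]
    (h : ¬ (IsCyclic G ∧ IsPrimePow (Nat.card G)))
    (C₁ C₂ : cosetPoset G) :
    Relation.ReflTransGen
      (fun A B : cosetPoset G => (A : Set G) ⊆ B ∨ (B : Set G) ⊆ A) C₁ C₂ := by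
  obtain ⟨_, x₁, H₁, hH₁, rfl⟩ := C₁
  obtain ⟨_, x₂, H₂, hH₂, rfl⟩ := C₂
  have := Subgroup.nontrivial_iff.mp (nontrivial_of_ne H₁ ⊤ hH₁)
  have hx₁ : Comparable ⟨_, smul_mem x₁ hH₁⟩ ⟨{x₁}, singleton_mem x₁⟩ :=
    .inr (Set.singleton_subset_iff.mpr (mem_own_leftCoset H₁.toSubmonoid x₁))
  have hx₂ : Comparable ⟨{x₂}, singleton_mem x₂⟩ ⟨_, smul_mem x₂ hH₂⟩ :=
    .inl (Set.singleton_subset_iff.mpr (mem_own_leftCoset H₂.toSubmonoid x₂))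
  have hmem : x₁⁻¹ * x₂ ∈ ⨆ H : {H : Subgroup G // H ≠ ⊤}, (H : Subgroup G) := by
    rw [Subgroup.iSup_ne_top_eq_top h]
    exact Subgroup.mem_top _
  have hjoin := singleton_joined_mul_of_mem_iSup hmem x₁
  rw [mul_inv_cancel_left] at hjoin
  exact .head hx₁ (hjoin.tail hx₂)
end

section
/- If G is cyclic of prime power order p^n (n ≥ 1), then G has a unique maximal subgroup, and the coset poset C(G) has exactly p connected components. -/
/-
In a cyclic group of order `p ^ n` with generator `g`, an element `g ^ k` with `p ∤ k`
generates the whole group, so every proper subgroup lies in `M = ⟨g ^ p⟩`, a subgroup of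
index `p`. Hence `M` is the unique maximal subgroup. Every proper coset `x H` lies in the
coset `x M`, and the cosets of `M` are pairwise disjoint, so the components of the coset poset
are exactly the `p` cosets of `M`.
-/

open scoped Pointwise

theorem IsGreatest.existsUnique_isCoatom {α : Type*} [PartialOrder α] [OrderTop α] {m : α}
    (h : IsGreatest {a | a ≠ (⊤ : α)} m) : ∃! a : α, IsCoatom a := by
  have hm : IsCoatom m := ⟨h.1, fun b hmb => by_contra fun hb => (h.2 hb).not_gt hmb⟩
  refine ⟨m, hm, fun c hc => ?_⟩
  exact (h.2 hc.1).eq_or_lt.resolve_right fun hcm => hm.1 (hc.2 m hcm)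

section CosetPoset

variable {G : Type*} [Group G]

theorem smul_mem_cosetPoset (x : G) {H : Subgroup G} (hH : H ≠ ⊤) :
    x • (H : Set G) ∈ cosetPoset G :=
  ⟨x, H, hH, rfl⟩

theorem QuotientGroup.image_mk_smul_eq_singleton {H M : Subgroup G} (hHM : H ≤ M) (x : G) :
    ((↑) '' (x • (H : Set G)) : Set (G ⧸ M)) = {(x : G ⧸ M)} := by
  rw [← Set.image_smul, Set.image_image, Set.eq_singleton_iff_unique_mem]
  refine ⟨⟨1, H.one_mem, by simp⟩, ?_⟩
  rintro _ ⟨h, hh, rfl⟩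
  show ((x * h : G) : G ⧸ M) = x
  rw [QuotientGroup.eq, mul_inv_rev, inv_mul_cancel_right]
  exact M.inv_mem (hHM hh)

theorem card_quot_cosetPoset_of_isGreatest {M : Subgroup G}
    (hM : IsGreatest {H : Subgroup G | H ≠ ⊤} M) :
    Nat.card (Quot (fun A B : cosetPoset G => (A : Set G) ⊆ B ∨ (B : Set G) ⊆ A)) =
      M.index := by
  set r := fun A B : cosetPoset G => (A : Set G) ⊆ B ∨ (B : Set G) ⊆ A
  have himage :
      ∀ A : cosetPoset G, ∃ q : G ⧸ M, (↑) '' (A : Set G) = ({q} : Set (G ⧸ M)) := by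
    rintro ⟨_, x, H, hH, rfl⟩
    exact ⟨x, QuotientGroup.image_mk_smul_eq_singleton (hM.2 hH) x⟩
  -- A proper coset lies in one coset of `M`, so its image in `G ⧸ M` is a singleton; these
  -- singletons are constant along comparabilities and separate the components.
  let ψ : Quot r → Set (G ⧸ M) := Quot.lift (fun A => (↑) '' (A : Set G)) fun A B hAB => by
    obtain ⟨a, ha⟩ := himage A
    obtain ⟨b, hb⟩ := himage B
    show ((↑) '' (A : Set G) : Set (G ⧸ M)) = (↑) '' (B : Set G)
    rw [ha, hb, Set.singleton_eq_singleton_iff]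
    rcases hAB with h | h
    · simpa [ha, hb] using Set.image_mono (f := ((↑) : G → G ⧸ M)) h
    · simpa [ha, hb, eq_comm] using Set.image_mono (f := ((↑) : G → G ⧸ M)) h
  let φ : G ⧸ M → Quot r :=
    Quotient.lift (fun x => Quot.mk r ⟨x • (M : Set G), smul_mem_cosetPoset x hM.1⟩)
      fun _ _ hab => by
        congr 2
        exact (leftCoset_eq_iff M).mpr (QuotientGroup.leftRel_apply.mp hab)
  have hψφ : ψ ∘ φ = ({·}) := by
    ext1 q
    induction q using QuotientGroup.induction_on with | _ x =>
    exact QuotientGroup.image_mk_smul_eq_singleton le_rfl x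
  have hφ : Function.Bijective φ := by
    refine ⟨.of_comp (f := ψ) (by rw [hψφ]; exact Set.singleton_injective), ?_⟩
    rintro ⟨_, x, H, hH, rfl⟩
    exact ⟨x, Quot.sound (Or.inr (Set.smul_set_mono (hM.2 hH)))⟩
  rw [← Nat.card_eq_of_bijective φ hφ, Subgroup.index]

end CosetPoset

section Cyclic

variable {G : Type*} [Group G] [Finite G]

open Subgroup

theorem Subgroup.index_zpowers_pow_of_dvd {g : G} (hg : ∀ x, x ∈ zpowers g) {d : ℕ}
    (hd : d ∣ orderOf g) : (zpowers (g ^ d)).index = d := by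
  have hpos : 0 < orderOf g := orderOf_pos g
  have hd0 : d ≠ 0 := by rintro rfl; rw [zero_dvd_iff] at hd; omega
  have h := (zpowers (g ^ d)).card_mul_index
  rw [Nat.card_zpowers, orderOf_pow_of_dvd hd0 hd,
    ← orderOf_eq_card_of_forall_mem_zpowers hg] at h
  refine Nat.eq_of_mul_eq_mul_left (Nat.div_pos (Nat.le_of_dvd hpos hd) (Nat.pos_of_ne_zero hd0)) ?_
  rw [h, Nat.div_mul_cancel hd]

theorem Subgroup.le_zpowers_pow_of_ne_top {g : G} (hg : ∀ x, x ∈ zpowers g) {p n : ℕ}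
    (hp : p.Prime) (hog : orderOf g = p ^ n) {H : Subgroup G} (hH : H ≠ ⊤) :
    H ≤ zpowers (g ^ p) := by
  intro x hx
  obtain ⟨k, rfl⟩ := mem_powers_iff_mem_zpowers.mpr (hg x)
  rcases Nat.coprime_or_dvd_of_prime hp k with hcop | ⟨m, rfl⟩
  · obtain ⟨m, hm⟩ := exists_pow_eq_self_of_coprime (x := g) (n := k) (by
      rw [hog]; exact (Nat.Coprime.pow_left n hcop).symm)
    have hgH : g ∈ H := hm ▸ H.pow_mem hx m
    exact absurd (eq_top_iff.mpr fun y _ => (zpowers_le.mpr hgH) (hg y)) hH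
  · show g ^ (p * m) ∈ _
    rw [pow_mul]
    exact pow_mem (mem_zpowers _) m

theorem IsCyclic.exists_isGreatest_ne_top_index_eq (hG : IsCyclic G) {p n : ℕ} (hp : p.Prime)
    (hn : 1 ≤ n) (hcard : Nat.card G = p ^ n) :
    ∃ M : Subgroup G, IsGreatest {H : Subgroup G | H ≠ ⊤} M ∧ M.index = p := by
  obtain ⟨g, hg⟩ := hG.exists_generator
  have hog : orderOf g = p ^ n := by rw [orderOf_eq_card_of_forall_mem_zpowers hg, hcard]
  have hindex : (zpowers (g ^ p)).index = p :=
    index_zpowers_pow_of_dvd hg (hog ▸ dvd_pow_self p (by omega))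
  refine ⟨zpowers (g ^ p), ⟨?_, fun H => le_zpowers_pow_of_ne_top hg hp hog⟩, hindex⟩
  show zpowers (g ^ p) ≠ ⊤
  rw [Ne, ← index_eq_one, hindex]
  exact hp.ne_one

end Cyclic

/-- If `G` is cyclic of prime power order `p ^ n` (`n ≥ 1`), then `G` has a
unique maximal (proper) subgroup, and the coset poset `C(G)` has exactly `p`
connected components (components being classes for the equivalence generated by
comparability under inclusion). -/
theorem stmt_1 {G : Type*} [Group G] [Finite G] (hG : IsCyclic G)
    (p n : ℕ) (hp : p.Prime) (hn : 1 ≤ n) (hcard : Nat.card G = p ^ n) :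
    (∃! M : Subgroup G, IsCoatom M) ∧
      Nat.card (Quot
        (fun A B : cosetPoset G => (A : Set G) ⊆ B ∨ (B : Set G) ⊆ A)) = p := by
  obtain ⟨M, hM, hindex⟩ := hG.exists_isGreatest_ne_top_index_eq hp hn hcard
  exact ⟨hM.existsUnique_isCoatom, (card_quot_cosetPoset_of_isGreatest hM).trans hindex⟩
end

section
/- The conjugation action of A5 on its set of six Sylow 5-subgroups is 2-transitive. -/
/-!
A Sylow `p`-subgroup `P` normalizes no Sylow `p`-subgroup other than itself, so it acts without
fixed points on the others, with orbits of `p`-power size. When there are exactly `p + 1` Sylow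
`p`-subgroups, `P` is therefore transitive on the remaining `p`; combined with the conjugacy of
Sylow subgroups this makes the action 2-transitive. In `A₅` the number of Sylow 5-subgroups
divides the index 12, is `1 mod 5`, and is not `1` because `A₅` is simple; hence it is
`6 = 5 + 1`.
-/

open MulAction

namespace Sylow

variable {p : ℕ} [Fact p.Prime] {G : Type*} [Group G]

theorem orbit_eq_compl_singleton_of_card_eq (hcard : Nat.card (Sylow p G) = p + 1)
    {P Q : Sylow p G} (hQP : Q ≠ P) : orbit (P : Subgroup G) Q = {P}ᶜ := by
  have : Finite (Sylow p G) := Nat.finite_of_card_ne_zero (by omega)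
  have hsub : orbit (P : Subgroup G) Q ⊆ {P}ᶜ := by
    rintro _ ⟨x, rfl⟩ hxQ
    have hxP : x • P = P := smul_eq_iff_mem_normalizer.mpr (Subgroup.le_normalizer x.2)
    exact hQP (smul_left_cancel x (hxQ.trans hxP.symm))
  have hQ_not_fixed : Q ∉ fixedPoints (P : Subgroup G) (Sylow p G) := fun h =>
    hQP (Sylow.ext (P.3 Q.2 (P.2.sylow_mem_fixedPoints_iff.mp h)))
  obtain ⟨n, hn⟩ := P.2.card_orbit Q
  have hn0 : n ≠ 0 := by
    rintro rfl
    rw [pow_zero, Nat.card_eq_one_iff_unique] at hn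
    exact hQ_not_fixed
      (subsingleton_orbit_iff_mem_fixedPoints.mp ((Set.subsingleton_coe _).mp hn.1))
  have hcompl : ({P}ᶜ : Set (Sylow p G)).ncard = p := by
    have := Set.ncard_add_ncard_compl ({P} : Set (Sylow p G))
    rw [Set.ncard_singleton, hcard] at this
    omega
  refine Set.eq_of_subset_of_ncard_le hsub ?_
  rw [hcompl, ← Nat.card_coe_set_eq, hn]
  exact Nat.le_self_pow hn0 p

theorem isMultiplyPretransitive_two_of_card_eq (hcard : Nat.card (Sylow p G) = p + 1) :
    IsMultiplyPretransitive G (Sylow p G) 2 := by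
  have : Finite (Sylow p G) := Nat.finite_of_card_ne_zero (by omega)
  refine is_two_pretransitive_iff.mpr fun {P Q P' Q'} hPQ hPQ' => ?_
  obtain ⟨g, rfl⟩ := exists_smul_eq G P P'
  have hgQ : g • Q ≠ g • P := fun h => hPQ (smul_left_cancel g h).symm
  obtain ⟨x, hx⟩ : Q' ∈ orbit ((g • P : Sylow p G) : Subgroup G) (g • Q) := by
    rw [orbit_eq_compl_singleton_of_card_eq hcard hgQ]
    exact Ne.symm hPQ'
  refine ⟨x * g, ?_, by rw [mul_smul]; exact hx⟩
  rw [mul_smul]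
  exact smul_eq_iff_mem_normalizer.mpr (Subgroup.le_normalizer x.2)

end Sylow

local notation "A₅" => alternatingGroup (Fin 5)

instance : Fact (Nat.Prime 5) := ⟨Nat.prime_five⟩

theorem nat_card_alternatingGroup_fin_five : Nat.card A₅ = 60 := by
  rw [nat_card_alternatingGroup, Nat.card_fin]
  rfl

theorem Sylow.card_alternatingGroup_fin_five (P : Sylow 5 A₅) : Nat.card P = 5 := by
  have h60 : padicValNat 5 60 = 1 := by
    rw [show 60 = 5 * 12 by rfl, padicValNat.mul (by norm_num) (by norm_num), padicValNat_self,
      padicValNat.eq_zero_of_not_dvd (by norm_num)]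
  rw [P.card_eq_multiplicity, nat_card_alternatingGroup_fin_five,
    Nat.factorization_def _ Nat.prime_five, h60, pow_one]

theorem card_sylow_five_alternatingGroup_fin_five : Nat.card (Sylow 5 A₅) = 6 := by
  obtain ⟨P⟩ : Nonempty (Sylow 5 A₅) := Sylow.nonempty
  have hP := P.card_alternatingGroup_fin_five
  have hindex : P.index = 12 := by
    have := P.toSubgroup.card_mul_index
    rw [hP, nat_card_alternatingGroup_fin_five] at this
    omega
  have hdvd : Nat.card (Sylow 5 A₅) ∣ 12 := hindex ▸ P.card_dvd_index
  have hmod : Nat.card (Sylow 5 A₅) % 5 = 1 := card_sylow_modEq_one 5 A₅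
  have hne : Nat.card (Sylow 5 A₅) ≠ 1 := by
    intro h1
    have : Subsingleton (Sylow 5 A₅) := (Nat.card_eq_one_iff_unique.mp h1).1
    rcases P.normal_of_subsingleton.eq_bot_or_eq_top with h | h
    · rw [h, Subgroup.card_bot] at hP
      omega
    · rw [h, Subgroup.card_top, nat_card_alternatingGroup_fin_five] at hP
      omega
  have hle := Nat.le_of_dvd (by norm_num) hdvd
  interval_cases Nat.card (Sylow 5 A₅) <;> omega

/-- The conjugation action of `A₅` on its six Sylow 5-subgroups is 2-transitive. -/
theorem stmt_8 (P₁ Q₁ P₂ Q₂ : Sylow 5 (alternatingGroup (Fin 5)))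
    (h₁ : P₁ ≠ Q₁) (h₂ : P₂ ≠ Q₂) :
    ∃ g : alternatingGroup (Fin 5), g • P₁ = P₂ ∧ g • Q₁ = Q₂ :=
  is_two_pretransitive_iff.mp
    (Sylow.isMultiplyPretransitive_two_of_card_eq card_sylow_five_alternatingGroup_fin_five)
    h₁ h₂
end

section
/- Let G be a finite group with a cyclic subgroup H such that any two distinct conjugates of H intersect trivially. Then for every nontrivial subgroup K ≤ H, the normalizer of K in G equals the normalizer of H in G. -/
/-!
If `g` normalizes `K`, then `K` lies in both `H` and `gHg⁻¹`; as `K ≠ ⊥`, the trivial-intersection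
property forces `gHg⁻¹ = H`. Conversely, conjugation by `g ∈ N(H)` restricts to an endomorphism of
the cyclic group `H`, hence is a power map `h ↦ h ^ m`, and power maps preserve every subgroup of `H`.
-/

namespace Subgroup

variable {G : Type*} [Group G]

theorem exists_conj_eq_zpow_of_mem_normalizer {H : Subgroup G} [IsCyclic H] {g : G}
    (hg : g ∈ normalizer (H : Set G)) : ∃ m : ℤ, ∀ h ∈ H, g * h * g⁻¹ = h ^ m := by
  let conjH : H →* H := ((MulAut.conj g).toMonoidHom.domRestrict H).codRestrict H
    fun h ↦ (mem_normalizer_iff.mp hg h).mp h.2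
  obtain ⟨m, hm⟩ := conjH.map_cyclic
  exact ⟨m, fun h hh ↦ congrArg Subtype.val (hm ⟨h, hh⟩)⟩

theorem normalizer_le_normalizer_of_isCyclic {H K : Subgroup G} [IsCyclic H] (hKH : K ≤ H) :
    normalizer (H : Set G) ≤ normalizer (K : Set G) := by
  refine le_normalizer_iff.mpr fun g hg k hk ↦ ?_
  obtain ⟨m, hm⟩ := exists_conj_eq_zpow_of_mem_normalizer hg
  rw [hm k (hKH hk)]
  exact zpow_mem hk m

theorem normalizer_le_normalizer_of_map_conj_inf_eq_bot {H K : Subgroup G}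
    (hTI : ∀ g : G, H.map (MulAut.conj g) ≠ H → H.map (MulAut.conj g) ⊓ H = ⊥)
    (hKH : K ≤ H) (hK : K ≠ ⊥) :
    normalizer (K : Set G) ≤ normalizer (H : Set G) := by
  intro g hg
  rw [mem_normalizer_iff_map_conj_eq] at hg ⊢
  by_contra hne
  have hK_le : K ≤ H.map (MulAut.conj g) ⊓ H := le_inf (hg ▸ map_mono hKH) hKH
  exact hK (le_bot_iff.mp (hTI g hne ▸ hK_le))

end Subgroup

theorem stmt_19_general {G : Type*} [Group G] (H : Subgroup G) (hH : IsCyclic H)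
    (hTI : ∀ g₁ g₂ : G,
      H.map (MulAut.conj g₁).toMonoidHom ≠ H.map (MulAut.conj g₂).toMonoidHom →
        H.map (MulAut.conj g₁).toMonoidHom ⊓ H.map (MulAut.conj g₂).toMonoidHom = ⊥)
    (K : Subgroup G) (hKH : K ≤ H) (hK : K ≠ ⊥) :
    Subgroup.normalizer (K : Set G) = Subgroup.normalizer (H : Set G) := by
  have hconj_one : H.map (MulAut.conj (1 : G)).toMonoidHom = H := by
    rw [map_one]
    exact H.map_id
  refine le_antisymm ?_ (Subgroup.normalizer_le_normalizer_of_isCyclic hKH)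
  refine Subgroup.normalizer_le_normalizer_of_map_conj_inf_eq_bot (fun g hne ↦ ?_) hKH hK
  have hTI_g := hTI g 1 (by rwa [hconj_one])
  rwa [hconj_one] at hTI_g

/-- If `G` is a finite group and `H ≤ G` is a cyclic subgroup any two distinct
conjugates of which intersect trivially, then every nontrivial subgroup `K ≤ H`
has the same normalizer in `G` as `H`. -/
theorem stmt_19 {G : Type*} [Group G] [Finite G] (H : Subgroup G) (hH : IsCyclic H)
    (hTI : ∀ g₁ g₂ : G,
      H.map (MulAut.conj g₁).toMonoidHom ≠ H.map (MulAut.conj g₂).toMonoidHom →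
        H.map (MulAut.conj g₁).toMonoidHom ⊓ H.map (MulAut.conj g₂).toMonoidHom = ⊥)
    (K : Subgroup G) (hKH : K ≤ H) (hK : K ≠ ⊥) :
    Subgroup.normalizer (K : Set G) = Subgroup.normalizer (H : Set G) :=
  stmt_19_general H hH hTI K hKH hK
end
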